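/- Let λ ∈ C be nonzero and let δ be the derivation of C[x,y] with δ(x) = 1 and δ(y) = 1 + λxy. Then C[x,y] is δ-simple; consequently C[x,y,z] with the Poisson bracket {x,y}=0, {z,x}=1, {y,z}=−(1+λxy) is Poisson simple. -/

import Mathlib

/-!
Read `ℂ[x, y]` as `ℂ[x][y]`, let `I` be a nonzero `δ`-stable ideal and `n` the least `y`-degree of
its nonzero elements. The operator `δ - λ n x` keeps `y`-degree `≤ n` and acts as `d/dx` on the
coefficient of `yⁿ` (it cancels the term `λ n x yⁿ` of `δ (yⁿ)`), so these coefficients form a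
nonzero `d/dx`-stable ideal of `ℂ[x]`, which is all of `ℂ[x]`. Hence `I` contains some
`p = yⁿ + f yⁿ⁻¹ + ⋯`, and `(δ - λ n x) p ∈ I` has `y`-degree `< n`, so it vanishes. If `n > 0`
its coefficient of `yⁿ⁻¹` gives `f' + n = λ x f`, impossible by comparing degrees; so `n = 0` and
`1 ∈ I`.

In `ℂ[x, y, z]`, `{x, -} = -∂/∂z`, so differentiating in `z` shows that a nonzero Poisson ideal
meets `ℂ[x, y]` nontrivially; that intersection is stable under `{z, -}`, which restricts to `δ`
on `ℂ[x, y]`, hence it contains `1`.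
-/

open MvPolynomial

/-- A Poisson bracket on a commutative `ℂ`-algebra `B`. -/
structure IsPoissonBracket {B : Type*} [CommRing B] [Algebra ℂ B]
    (br : B → B → B) : Prop where
  add_left : ∀ a b c : B, br (a + b) c = br a c + br b c
  smul_left : ∀ (r : ℂ) (a b : B), br (r • a) b = r • br a b
  antisymm : ∀ a b : B, br a b = - br b a
  jacobi : ∀ a b c : B, br a (br b c) + br b (br c a) + br c (br a b) = 0
  leibniz : ∀ a b c : B, br a (b * c) = br a b * c + b * br a c

/-- `I` is a Poisson ideal for the bracket `br`. -/
def IsPoissonIdeal {B : Type*} [CommRing B] (br : B → B → B) (I : Ideal B) : Prop :=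
  ∀ b : B, ∀ i ∈ I, br b i ∈ I

namespace Polynomial

theorem exists_C_mem_of_derivative_mem {A : Type*} [CommRing A] [NoZeroSMulDivisors ℕ A]
    {I : Ideal A[X]} (hI : ∀ p ∈ I, derivative p ∈ I) {p : A[X]} (hpI : p ∈ I) (hp : p ≠ 0) :
    ∃ a ≠ 0, C a ∈ I := by
  set q := derivative^[p.natDegree] p
  have hqI : q ∈ I := Function.Iterate.rec (· ∈ I) hpI hI _
  refine ⟨q.coeff 0, ?_, ?_⟩
  · rw [coeff_iterate_derivative, zero_add, Nat.descFactorial_self]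
    exact smul_ne_zero (Nat.factorial_ne_zero _) (leadingCoeff_ne_zero.mpr hp)
  · rwa [← eq_C_of_natDegree_eq_zero (by simpa using natDegree_iterate_derivative p p.natDegree)]

end Polynomial

theorem Ideal.mem_leadingCoeffNth_iff {R : Type*} [Semiring R] (I : Ideal (Polynomial R))
    (n : ℕ) (a : R) : a ∈ I.leadingCoeffNth n ↔ ∃ p ∈ I, p.natDegree ≤ n ∧ p.coeff n = a := by
  simp only [leadingCoeffNth, degreeLE, Submodule.mem_map, Submodule.mem_inf,
    Polynomial.mem_degreeLE, Polynomial.lcoeff_apply, mem_ofPolynomial,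
    Polynomial.natDegree_le_iff_degree_le]
  exact ⟨fun ⟨p, ⟨hp, hpI⟩, h⟩ => ⟨p, hpI, hp, h⟩, fun ⟨p, hpI, hp, h⟩ => ⟨p, ⟨hp, hpI⟩, h⟩⟩

namespace Polynomial.Bivariate

variable {K : Type*} [Field K] {lam : K}

/-- The derivation `∂ₓ + (1 + λxy) ∂_y` of `K[x, y]`, with `K[x, y]` read as `K[X][Y]`. -/
noncomputable def delta (lam : K) (q : K[X][Y]) : K[X][Y] :=
  PolynomialModule.equivPolynomialSelf (derivative'.mapCoeffs q) +
    (1 + Polynomial.C (Polynomial.C lam * Polynomial.X) * Y) * derivative q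

noncomputable def twist (lam : K) (n : ℕ) (q : K[X][Y]) : K[X][Y] :=
  delta lam q - Polynomial.C (Polynomial.C (lam * n) * Polynomial.X) * q

theorem coeff_twist (lam : K) (n : ℕ) (q : K[X][Y]) (k : ℕ) :
    (twist lam n q).coeff k = derivative (q.coeff k) +
      Polynomial.C (lam * (k - n)) * Polynomial.X * q.coeff k +
        q.coeff (k + 1) * ((k : K[X]) + 1) := by
  have hmap : (PolynomialModule.equivPolynomialSelf (derivative'.mapCoeffs q)).coeff k =
      derivative (q.coeff k) := rfl
  rw [twist, delta, coeff_sub, coeff_add, hmap]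
  rcases k with _ | k
  · simp [coeff_derivative, add_mul, mul_assoc]
    ring
  · simp [coeff_derivative, add_mul, mul_assoc, coeff_X_mul]
    ring

theorem twist_mem {I : Ideal K[X][Y]} (hI : ∀ p ∈ I, delta lam p ∈ I) (n : ℕ) {p : K[X][Y]}
    (hp : p ∈ I) : twist lam n p ∈ I :=
  I.sub_mem (hI p hp) (I.mul_mem_left _ hp)

theorem natDegree_twist_le {n : ℕ} {p : K[X][Y]} (hp : p.natDegree ≤ n) :
    (twist lam n p).natDegree ≤ n := by
  refine natDegree_le_iff_coeff_eq_zero.mpr fun k hk => ?_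
  rw [coeff_twist, coeff_eq_zero_of_natDegree_lt (hp.trans_lt hk),
    coeff_eq_zero_of_natDegree_lt (by omega)]
  simp

theorem coeff_twist_self {n : ℕ} {p : K[X][Y]} (hp : p.natDegree ≤ n) :
    (twist lam n p).coeff n = derivative (p.coeff n) := by
  rw [coeff_twist, sub_self, coeff_eq_zero_of_natDegree_lt (n := n + 1) (by omega)]
  simp

theorem leadingCoeffNth_natDegree_eq_top [CharZero K] {I : Ideal K[X][Y]}
    (hI : ∀ p ∈ I, delta lam p ∈ I) {p : K[X][Y]} (hpI : p ∈ I) (hp : p ≠ 0) :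
    I.leadingCoeffNth p.natDegree = ⊤ := by
  have hJ : ∀ f ∈ I.leadingCoeffNth p.natDegree, derivative f ∈ I.leadingCoeffNth p.natDegree := by
    simp only [Ideal.mem_leadingCoeffNth_iff]
    rintro _ ⟨q, hqI, hq, rfl⟩
    exact ⟨_, twist_mem hI _ hqI, natDegree_twist_le hq, coeff_twist_self hq⟩
  have hlead : p.leadingCoeff ∈ I.leadingCoeffNth p.natDegree :=
    (I.mem_leadingCoeffNth_iff _ _).mpr ⟨p, hpI, le_rfl, rfl⟩
  obtain ⟨a, ha, haJ⟩ := exists_C_mem_of_derivative_mem hJ hlead (leadingCoeff_ne_zero.mpr hp)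
  exact Ideal.eq_top_of_isUnit_mem _ haJ (isUnit_C.mpr ha.isUnit)

theorem derivative_add_C_ne_C_mul_X_mul (hlam : lam ≠ 0) {c : K} (hc : c ≠ 0) (f : K[X]) :
    derivative f + C c ≠ C lam * X * f := by
  intro h
  rcases eq_or_ne f 0 with rfl | hf
  · simp_all
  have hle : (derivative f + C c).natDegree ≤ f.natDegree :=
    natDegree_add_le_of_degree_le ((natDegree_derivative_le f).trans (Nat.sub_le _ _))
      (by simp)
  rw [h, mul_assoc, natDegree_C_mul hlam, natDegree_X_mul hf] at hle
  omega

theorem eq_top_of_forall_natDegree_lt [CharZero K] (hlam : lam ≠ 0) {I : Ideal K[X][Y]}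
    (hI : ∀ p ∈ I, delta lam p ∈ I) {n : ℕ} (hmin : ∀ q ∈ I, q.natDegree < n → q = 0)
    (htop : I.leadingCoeffNth n = ⊤) : I = ⊤ := by
  obtain ⟨p, hpI, hpn, hp⟩ := (I.mem_leadingCoeffNth_iff n 1).mp (htop ▸ Submodule.mem_top)
  rcases n with _ | m
  · rw [eq_C_of_natDegree_eq_zero (Nat.le_zero.mp hpn), hp, map_one] at hpI
    exact I.eq_top_of_isUnit_mem hpI isUnit_one
  have htwist : twist lam (m + 1) p = 0 := by
    refine hmin _ (twist_mem hI _ hpI) (Nat.lt_succ_of_le ?_)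
    exact natDegree_le_pred (natDegree_twist_le hpn)
      (by rw [coeff_twist_self hpn, hp, derivative_one])
  have hcoeff := coeff_twist lam (m + 1) p m
  rw [htwist, hp, coeff_zero] at hcoeff
  refine (derivative_add_C_ne_C_mul_X_mul hlam (Nat.cast_add_one_ne_zero m) (p.coeff m) ?_).elim
  simp only [Nat.cast_add, Nat.cast_one, sub_add_cancel_left, mul_neg, mul_one, map_neg] at hcoeff
  simp only [map_add, map_natCast, map_one]
  linear_combination -hcoeff

theorem ideal_eq_bot_or_top [CharZero K] (hlam : lam ≠ 0) (I : Ideal K[X][Y])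
    (hI : ∀ p ∈ I, delta lam p ∈ I) : I = ⊥ ∨ I = ⊤ := by
  refine or_iff_not_imp_left.mpr fun hI0 => ?_
  obtain ⟨p, ⟨hpI, hp⟩, hmin⟩ := (measure natDegree).wf.has_min {p | p ∈ I ∧ p ≠ 0}
    (Submodule.exists_mem_ne_zero_of_ne_bot hI0)
  exact eq_top_of_forall_natDegree_lt hlam hI
    (fun q hq hlt => by_contra fun h => hmin q ⟨hq, h⟩ hlt)
    (leadingCoeffNth_natDegree_eq_top hI hpI hp)

end Polynomial.Bivariate

namespace MvPolynomial

section TwoVariables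

variable {K : Type*} [Field K] {lam : K}
  {δ : Derivation K (MvPolynomial (Fin 2) K) (MvPolynomial (Fin 2) K)}

open Polynomial.Bivariate in
theorem derivation_equivMvPolynomial_apply (hx : δ (X 0) = 1)
    (hy : δ (X 1) = 1 + C lam * X 0 * X 1) (q : Polynomial (Polynomial K)) :
    δ (equivMvPolynomial K q) = equivMvPolynomial K (delta lam q) := by
  have hδ : δ = pderiv 0 + (1 + C lam * X 0 * X 1 : MvPolynomial (Fin 2) K) • pderiv 1 :=
    derivation_ext fun i => by fin_cases i <;> simp [hx, hy, pderiv_X]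
  rw [hδ, delta]
  simp [pderiv_zero_equivMvPolynomial, pderiv_one_equivMvPolynomial]

theorem ideal_eq_bot_or_top_of_derivation [CharZero K] (hlam : lam ≠ 0)
    (hx : δ (X 0) = 1) (hy : δ (X 1) = 1 + C lam * X 0 * X 1)
    (I : Ideal (MvPolynomial (Fin 2) K)) (hI : ∀ p ∈ I, δ p ∈ I) : I = ⊥ ∨ I = ⊤ := by
  let e := Polynomial.Bivariate.equivMvPolynomial K
  have he : ∀ q ∈ I.comap e, Polynomial.Bivariate.delta lam q ∈ I.comap e := fun q hq => by
    rw [Ideal.mem_comap, ← derivation_equivMvPolynomial_apply hx hy]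
    exact hI _ hq
  refine (Polynomial.Bivariate.ideal_eq_bot_or_top hlam _ he).imp (fun h => ?_) (fun h => ?_)
  · exact Ideal.comap_injective_of_surjective e e.surjective
      (h.trans (Ideal.comap_bot_of_injective e e.injective).symm)
  · exact Ideal.comap_injective_of_surjective e e.surjective (h.trans Ideal.comap_top.symm)

end TwoVariables

variable (R : Type*) [CommRing R] (n : ℕ)

noncomputable def lastVarEquiv :
    MvPolynomial (Fin (n + 1)) R ≃ₐ[R] Polynomial (MvPolynomial (Fin n) R) :=
  (renameEquiv R finSuccEquivLast).trans (optionEquivLeft R (Fin n))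

variable {R n}

@[simp]
theorem lastVarEquiv_X_last : lastVarEquiv R n (X (Fin.last n)) = Polynomial.X := by
  simp [lastVarEquiv]

@[simp]
theorem lastVarEquiv_C (a : R) : lastVarEquiv R n (C a) = Polynomial.C (C a) := by
  simp [lastVarEquiv]

@[simp]
theorem lastVarEquiv_X_castSucc (i : Fin n) :
    lastVarEquiv R n (X i.castSucc) = Polynomial.C (X i) := by
  simp [lastVarEquiv]

theorem lastVarEquiv_symm_C (f : MvPolynomial (Fin n) R) :
    (lastVarEquiv R n).symm (Polynomial.C f) = rename Fin.castSucc f := by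
  rw [AlgEquiv.symm_apply_eq]
  induction f using MvPolynomial.induction_on with
  | C a => simp
  | add p q hp hq => simp [hp, hq]
  | mul_X p i hp => simp [hp]

theorem lastVarEquiv_pderiv_last (p : MvPolynomial (Fin (n + 1)) R) :
    lastVarEquiv R n (pderiv (Fin.last n) p) = Polynomial.derivative (lastVarEquiv R n p) := by
  induction p using MvPolynomial.induction_on with
  | C a => simp
  | add p q hp hq => simp [hp, hq]
  | mul_X p i hp =>
    induction i using Fin.lastCases with
    | last => simp [hp]; ring
    | cast j => simp [hp, pderiv_X, Fin.castSucc_ne_last]; ring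

theorem exists_rename_castSucc_mem [IsDomain R] [CharZero R]
    {I : Ideal (MvPolynomial (Fin (n + 1)) R)} (hI : ∀ p ∈ I, pderiv (Fin.last n) p ∈ I) (hI0 : I ≠ ⊥) :
    ∃ f ≠ 0, rename Fin.castSucc f ∈ I := by
  let e := lastVarEquiv R n
  have he : ∀ q ∈ I.comap e.symm, Polynomial.derivative q ∈ I.comap e.symm := fun q hq => by
    rw [Ideal.mem_comap, ← e.apply_symm_apply q, ← lastVarEquiv_pderiv_last, e.symm_apply_apply]
    exact hI _ hq
  obtain ⟨p, hpI, hp⟩ := Submodule.exists_mem_ne_zero_of_ne_bot hI0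
  obtain ⟨f, hf, hfI⟩ := Polynomial.exists_C_mem_of_derivative_mem he
    (show e p ∈ I.comap e.symm by simpa using hpI) (e.map_ne_zero_iff.mpr hp)
  exact ⟨f, hf, lastVarEquiv_symm_C f ▸ hfI⟩

theorem derivation_algHom_apply {σ A : Type*} [CommRing A] [Algebra R A] (D : Derivation R A A)
    (d : Derivation R (MvPolynomial σ R) (MvPolynomial σ R)) (φ : MvPolynomial σ R →ₐ[R] A)
    (h : ∀ i, D (φ (X i)) = φ (d (X i))) (f : MvPolynomial σ R) : D (φ f) = φ (d f) := by
  induction f using MvPolynomial.induction_on with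
  | C a => simp
  | add p q hp hq => simp [hp, hq]
  | mul_X p i hp =>
    simp only [map_mul, map_add, Derivation.leibniz, smul_eq_mul, hp, h]

end MvPolynomial

namespace IsPoissonBracket

variable {B : Type*} [CommRing B] [Algebra ℂ B] {br : B → B → B}

theorem add_right (hbr : IsPoissonBracket br) (a b c : B) : br a (b + c) = br a b + br a c := by
  rw [hbr.antisymm, hbr.add_left, neg_add, ← hbr.antisymm, ← hbr.antisymm]

theorem smul_right (hbr : IsPoissonBracket br) (r : ℂ) (a b : B) : br a (r • b) = r • br a b := by
  rw [hbr.antisymm, hbr.smul_left, ← smul_neg, ← hbr.antisymm]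

theorem self_eq_zero (hbr : IsPoissonBracket br) (a : B) : br a a = 0 := by
  have h : (2 : ℂ) • br a a = 0 := by
    rw [two_smul]
    nth_rewrite 2 [hbr.antisymm]
    exact add_neg_cancel _
  exact (smul_eq_zero.mp h).resolve_left two_ne_zero

def derivation (hbr : IsPoissonBracket br) (a : B) : Derivation ℂ B B where
  toFun := br a
  map_add' := hbr.add_right a
  map_smul' r b := hbr.smul_right r a b
  map_one_eq_zero' := by simpa using hbr.leibniz a 1 1
  leibniz' b c := by
    rw [LinearMap.coe_mk, AddHom.coe_mk, hbr.leibniz, smul_eq_mul, smul_eq_mul]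
    ring

theorem derivation_apply (hbr : IsPoissonBracket br) (a b : B) : hbr.derivation a b = br a b := rfl

end IsPoissonBracket

theorem stmt_18 (lam : ℂ) (hlam : lam ≠ 0)
    (δ : Derivation ℂ (MvPolynomial (Fin 2) ℂ) (MvPolynomial (Fin 2) ℂ))
    (hx : δ (X 0) = 1) (hy : δ (X 1) = 1 + C lam * X 0 * X 1) :
    (∀ I : Ideal (MvPolynomial (Fin 2) ℂ), (∀ p ∈ I, δ p ∈ I) → I = ⊥ ∨ I = ⊤) ∧
      ∀ br : MvPolynomial (Fin 3) ℂ → MvPolynomial (Fin 3) ℂ → MvPolynomial (Fin 3) ℂ,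
        IsPoissonBracket br →
        br (X 0) (X 1) = 0 → br (X 2) (X 0) = 1 →
        br (X 1) (X 2) = -(1 + C lam * X 0 * X 1) →
        ∀ I : Ideal (MvPolynomial (Fin 3) ℂ), IsPoissonIdeal br I → I = ⊥ ∨ I = ⊤ := by
  refine ⟨ideal_eq_bot_or_top_of_derivation hlam hx hy, ?_⟩
  intro br hbr hxy hzx hyz I hI
  refine or_iff_not_imp_left.mpr fun hI0 => ?_
  have hbrx : hbr.derivation (X 0) = -pderiv 2 := derivation_ext fun i => by
    fin_cases i <;>
      simp [hbr.derivation_apply, hbr.self_eq_zero, hxy, hbr.antisymm (X 0) (X 2), hzx, pderiv_X]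
  have hbrz : ∀ i, hbr.derivation (X 2) (rename Fin.castSucc (X i)) =
      rename Fin.castSucc (δ (X i)) := fun i => by
    fin_cases i <;> simp [hbr.derivation_apply, hx, hy, hzx, hbr.antisymm (X 2) (X 1), hyz]
  have hz : ∀ p ∈ I, pderiv (Fin.last 2) p ∈ I := fun p hp => by
    simpa [← hbr.derivation_apply, hbrx] using I.neg_mem (hI (X 0) p hp)
  obtain ⟨f, hf, hfI⟩ := exists_rename_castSucc_mem hz hI0
  set J := I.comap (rename Fin.castSucc)
  have hJ : ∀ g ∈ J, δ g ∈ J := fun g hg => by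
    rw [Ideal.mem_comap, ← derivation_algHom_apply _ δ _ hbrz]
    exact hI _ _ hg
  have hJ0 : J ≠ ⊥ := (Submodule.ne_bot_iff _).mpr ⟨f, hfI, hf⟩
  exact Ideal.comap_eq_top_iff.mp
    ((ideal_eq_bot_or_top_of_derivation hlam hx hy J hJ).resolve_left hJ0)
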